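/- If two replacement policies P and P' of the same associativity n have equal trace semantics, then for every initial cache content cc_0, the caches they induce have equal trace semantics: ⟦Cache(P, cc_0, n)⟧ = ⟦Cache(P', cc_0, n)⟧. -/

import Mathlib

structure Mealy (I O S : Type) where
  init : S
  step : S → I → S
  out : S → I → O

def Mealy.run {I O S : Type} (M : Mealy I O S) : S → List (I × O) → Prop
  | _, [] => True
  | s, (i, o) :: t => M.out s i = o ∧ M.run (M.step s i) t

def Mealy.traces {I O S : Type} (M : Mealy I O S) : Set (List (I × O)) :=
  {t | M.run M.init t}

inductive PIn (n : ℕ) where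
  | hit (i : Fin n)
  | evct
deriving DecidableEq

inductive POut (n : ℕ) where
  | none
  | evict (i : Fin n)
deriving DecidableEq

inductive COut where
  | hit
  | miss
deriving DecidableEq

/-- The well-formedness conditions on a replacement policy:
`λ(cs, Evct)` is some `Evict i` and `λ(cs, Hit i) = ⊥`. -/
def ValidPolicy {n : ℕ} {S : Type} (P : Mealy (PIn n) (POut n) S) : Prop :=
  (∀ cs, ∃ i, P.out cs PIn.evct = POut.evict i) ∧
  (∀ cs i, P.out cs (PIn.hit i) = POut.none)

/-- The cache transition relation induced by a replacement policy. -/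
inductive CacheStep {n : ℕ} {S B : Type} (P : Mealy (PIn n) (POut n) S) :
    (Fin n → B) × S → B → COut → (Fin n → B) × S → Prop where
  | hit {cc : Fin n → B} {cs : S} {b : B} (i : Fin n) :
      cc i = b → P.out cs (PIn.hit i) = POut.none →
      CacheStep P (cc, cs) b COut.hit (cc, P.step cs (PIn.hit i))
  | miss {cc : Fin n → B} {cs : S} {b : B} (i : Fin n) :
      (∀ j, cc j ≠ b) → P.out cs PIn.evct = POut.evict i →
      CacheStep P (cc, cs) b COut.miss (Function.update cc i b, P.step cs PIn.evct)

def CacheRun {n : ℕ} {S B : Type} (P : Mealy (PIn n) (POut n) S) :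
    (Fin n → B) × S → List (B × COut) → Prop
  | _, [] => True
  | s, (b, o) :: t => ∃ s', CacheStep P s b o s' ∧ CacheRun P s' t

def CacheTraces {n : ℕ} {S B : Type} (P : Mealy (PIn n) (POut n) S)
    (cc₀ : Fin n → B) : Set (List (B × COut)) :=
  {t | CacheRun P (cc₀, P.init) t}

/-!
Trace equivalence of policy states is a bisimulation: equivalent states answer every input
with the same output (a one-letter trace already shows this) and step to equivalent states.
Hence a cache run of `P` is replayed by `P'` step by step, with the same cache content and the
policy states kept trace equivalent.
-/

namespace Mealy

variable {I O S S' : Type}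

def TraceEquiv (M : Mealy I O S) (M' : Mealy I O S') (s : S) (s' : S') : Prop :=
  ∀ w, M.run s w ↔ M'.run s' w

variable {M : Mealy I O S} {M' : Mealy I O S'} {s : S} {s' : S'}

theorem TraceEquiv.symm (h : TraceEquiv M M' s s') : TraceEquiv M' M s' s :=
  fun w => (h w).symm

theorem TraceEquiv.out_eq (h : TraceEquiv M M' s s') (i : I) : M'.out s' i = M.out s i :=
  ((h [(i, M.out s i)]).1 ⟨rfl, trivial⟩).1

theorem TraceEquiv.step (h : TraceEquiv M M' s s') (i : I) :
    TraceEquiv M M' (M.step s i) (M'.step s' i) := fun w =>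
  calc M.run (M.step s i) w ↔ M.run s ((i, M.out s i) :: w) := (and_iff_right rfl).symm
    _ ↔ M'.run s' ((i, M.out s i) :: w) := h _
    _ ↔ M'.run (M'.step s' i) w := and_iff_right (h.out_eq i)

end Mealy

section Cache

variable {n : ℕ} {S S' B : Type} {P : Mealy (PIn n) (POut n) S} {P' : Mealy (PIn n) (POut n) S'}
  {cs : S} {cs' : S'}

theorem CacheStep.of_traceEquiv (h : Mealy.TraceEquiv P P' cs cs') {cc cc₁ : Fin n → B} {b : B}
    {o : COut} {cs₁ : S} (hstep : CacheStep P (cc, cs) b o (cc₁, cs₁)) :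
    ∃ cs₁', CacheStep P' (cc, cs') b o (cc₁, cs₁') ∧ Mealy.TraceEquiv P P' cs₁ cs₁' := by
  cases hstep with
  | hit i hcc hout =>
    exact ⟨_, .hit i hcc ((h.out_eq _).trans hout), h.step _⟩
  | miss i habsent hout =>
    exact ⟨_, .miss i habsent ((h.out_eq _).trans hout), h.step _⟩

theorem CacheRun.of_traceEquiv (h : Mealy.TraceEquiv P P' cs cs') {cc : Fin n → B}
    {t : List (B × COut)} (hrun : CacheRun P (cc, cs) t) : CacheRun P' (cc, cs') t := by
  induction t generalizing cc cs cs' with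
  | nil => trivial
  | cons e t ih =>
    obtain ⟨⟨cc₁, cs₁⟩, hstep, hrun⟩ := hrun
    obtain ⟨cs₁', hstep', h₁⟩ := CacheStep.of_traceEquiv h hstep
    exact ⟨_, hstep', ih h₁ hrun⟩

end Cache

theorem policy_semantics_determines_cache_semantics_general {n : ℕ} {S S' B : Type}
    (P : Mealy (PIn n) (POut n) S) (P' : Mealy (PIn n) (POut n) S')
    (heq : P.traces = P'.traces)
    (cc₀ : Fin n → B) :
    CacheTraces P cc₀ = CacheTraces P' cc₀ := by
  have hinit : Mealy.TraceEquiv P P' P.init P'.init := Set.ext_iff.mp heq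
  ext t
  exact ⟨CacheRun.of_traceEquiv hinit, CacheRun.of_traceEquiv hinit.symm⟩

theorem policy_semantics_determines_cache_semantics {n : ℕ} {S S' B : Type}
    (P : Mealy (PIn n) (POut n) S) (P' : Mealy (PIn n) (POut n) S')
    (hP : ValidPolicy P) (hP' : ValidPolicy P')
    (heq : P.traces = P'.traces)
    (cc₀ : Fin n → B) (hcc₀ : Function.Injective cc₀) :
    CacheTraces P cc₀ = CacheTraces P' cc₀ :=
  policy_semantics_determines_cache_semantics_general P P' heq cc₀
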